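/- For each n ≥ 1, let ε_0, …, ε_n be independent random signs, each equal to +1 or −1 with probability 1/2, let P_n(x) = Σ_{m=0}^n C(n,m) ε_m cos(mx), and let R_n = Σ_{m=0}^n C(n,m)² and T_n = Σ_{m=0}^n C(n,m)⁴. Then for any real λ, the expectation E[ (1/(2π)) ∫_0^{2π} e^{λ P_n(x)} dx ] is at least e^{(1/4)λ² R_n − λ⁴ T_n}. -/

import Mathlib

open MeasureTheory Finset Filter Real

/-- The uniform probability measure on sign vectors, encoded as `Fin (n+1) → Bool`. -/
noncomputable def signs (n : ℕ) : Measure (Fin (n+1) → Bool) :=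
  (PMF.uniformOfFintype (Fin (n+1) → Bool)).toMeasure

/-- The `m`-th random sign: `+1` or `-1`, each with probability `1/2`,
independent across coordinates under `signs n`. -/
noncomputable def eps {n : ℕ} (ω : Fin (n+1) → Bool) (m : Fin (n+1)) : ℝ :=
  if ω m then 1 else -1

/-- The random trigonometric polynomial `P_n(x) = ∑_{m=0}^n C(n,m) ε_m cos (m x)`. -/
noncomputable def P (n : ℕ) (ω : Fin (n+1) → Bool) (x : ℝ) : ℝ :=
  ∑ m : Fin (n+1), (n.choose m : ℝ) * eps ω m * Real.cos (m * x)

/-- `R_n = ∑_{m=0}^n C(n,m)²`. -/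
noncomputable def R (n : ℕ) : ℝ :=
  ∑ m ∈ range (n+1), (n.choose m : ℝ)^2

/-- `T_n = ∑_{m=0}^n C(n,m)⁴`. -/
noncomputable def T (n : ℕ) : ℝ :=
  ∑ m ∈ range (n+1), (n.choose m : ℝ)^4

/-!
Averaging over the signs first, independence gives
`E[exp (λ P_n(x))] = ∏ₘ cosh (aₘ(x))` with `aₘ(x) = λ C(n,m) cos (m x)`, and
`cosh t ≥ 1 + t²/2 ≥ exp (t²/2 - t⁴/4)` bounds this below by `exp (lowerExponent n λ x)`.
Since `cos² (m x)` has mean at least `1/2` on `[0, 2π]`, the mean of `lowerExponent n λ` is at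
least `λ² R_n / 4 - λ⁴ T_n / 4`, and Jensen's inequality for `exp` in `x` concludes.
-/

lemma one_add_sq_div_two_le_cosh (t : ℝ) : 1 + t ^ 2 / 2 ≤ cosh t := by
  have h := sum_le_hasSum (range 2) (fun i _ => by rw [pow_mul]; positivity) (hasSum_cosh t)
  simpa [Finset.sum_range_succ, Nat.factorial] using h

lemma exp_sq_div_two_sub_pow_four_div_four_le_cosh (t : ℝ) :
    exp (t ^ 2 / 2 - t ^ 4 / 4) ≤ cosh t := by
  set u := t ^ 2 / 2 with hu_def
  have hu : 0 ≤ u := by positivity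
  have hlog : u - u ^ 2 ≤ log (1 + u) := by
    have h1u : 0 < 1 + u := by linarith
    have hsub : 1 - (1 + u)⁻¹ = u / (1 + u) := by field_simp; ring
    refine le_trans ?_ (one_sub_inv_le_log_of_pos h1u)
    rw [hsub, le_div_iff₀ h1u]
    nlinarith [pow_nonneg hu 3]
  calc exp (t ^ 2 / 2 - t ^ 4 / 4) = exp (u - u ^ 2) := by rw [hu_def]; ring_nf
    _ ≤ exp (log (1 + u)) := exp_le_exp.2 hlog
    _ = 1 + u := exp_log (by positivity)
    _ ≤ cosh t := one_add_sq_div_two_le_cosh t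

lemma integral_intervalIntegral_comm_of_fintype {Ω : Type*} [Fintype Ω] [MeasurableSpace Ω]
    [MeasurableSingletonClass Ω] (μ : Measure Ω) [IsFiniteMeasure μ] {f : Ω → ℝ → ℝ} {a b : ℝ}
    (hf : ∀ ω, IntervalIntegrable (f ω) volume a b) :
    ∫ ω, (∫ x in a..b, f ω x) ∂μ = ∫ x in a..b, ∫ ω, f ω x ∂μ := by
  simp only [integral_fintype, Integrable.of_finite, smul_eq_mul]
  rw [intervalIntegral.integral_finsetSum fun ω _ => (hf ω).const_mul _]
  exact sum_congr rfl fun ω _ => (intervalIntegral.integral_const_mul _ _).symm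

-- Jensen's inequality for `exp`, through the tangent line of `exp` at `c`.
lemma exp_mul_le_intervalIntegral_exp {f : ℝ → ℝ} {a b c : ℝ} (hab : a ≤ b)
    (hf : IntervalIntegrable f volume a b)
    (hef : IntervalIntegrable (fun x => exp (f x)) volume a b)
    (hc : c * (b - a) ≤ ∫ x in a..b, f x) :
    exp c * (b - a) ≤ ∫ x in a..b, exp (f x) := by
  have htangent : ∀ x, exp c * (f x - c + 1) ≤ exp (f x) := fun x => by
    calc exp c * (f x - c + 1) ≤ exp c * exp (f x - c) := by gcongr; exact add_one_le_exp _
      _ = exp (f x) := by rw [← exp_add, add_sub_cancel]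
  calc exp c * (b - a) ≤ exp c * ((∫ x in a..b, f x) - c * (b - a) + (b - a)) := by
        gcongr; linarith
    _ = ∫ x in a..b, exp c * (f x - c + 1) := by
        rw [intervalIntegral.integral_const_mul, intervalIntegral.integral_add
          (hf.sub intervalIntegrable_const) intervalIntegrable_const,
          intervalIntegral.integral_sub hf intervalIntegrable_const]
        simp only [intervalIntegral.integral_const, smul_eq_mul]
        ring
    _ ≤ ∫ x in a..b, exp (f x) :=
        intervalIntegral.integral_mono_on hab
          ((hf.sub intervalIntegrable_const).add intervalIntegrable_const |>.const_mul _) hef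
          fun x _ => htangent x

lemma pi_le_integral_cos_nat_mul_sq (m : ℕ) : π ≤ ∫ x in (0:ℝ)..(2 * π), cos (m * x) ^ 2 := by
  rcases Nat.eq_zero_or_pos m with rfl | hm
  · simp only [CharP.cast_eq_zero, zero_mul, cos_zero, one_pow, intervalIntegral.integral_const,
      sub_zero, smul_eq_mul, mul_one]
    linarith [pi_pos]
  · have hm' : (m : ℝ) ≠ 0 := by positivity
    have hsin : sin (m * (2 * π)) = 0 := by
      rw [show (m : ℝ) * (2 * π) = ((2 * m : ℕ) : ℝ) * π by push_cast; ring, sin_nat_mul_pi]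
    rw [intervalIntegral.integral_comp_mul_left (fun u => cos u ^ 2) hm', mul_zero,
      integral_cos_sq, hsin]
    simp only [sin_zero, cos_zero, smul_eq_mul]
    exact le_of_eq (by field_simp; ring)

lemma integral_exp_sum_mul_eps (n : ℕ) (a : Fin (n + 1) → ℝ) :
    ∫ ω, exp (∑ m, a m * eps ω m) ∂(signs n) = ∏ m, cosh (a m) := by
  have hweight : ∀ ω, ((PMF.uniformOfFintype (Fin (n + 1) → Bool)) ω).toReal
      = ∏ _m : Fin (n + 1), (1 / 2 : ℝ) := by
    intro ω
    simp [ENNReal.toReal_inv]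
  rw [signs, PMF.integral_eq_sum]
  simp only [eps]
  simp_rw [hweight, smul_eq_mul, exp_sum, ← prod_mul_distrib]
  rw [← Fintype.prod_sum (fun m (b : Bool) => 1 / 2 * exp (a m * if b then 1 else -1))]
  refine prod_congr rfl fun m _ => ?_
  simp only [Fintype.sum_bool, ↓reduceIte, Bool.false_eq_true, mul_one, mul_neg, cosh_eq]
  ring

instance isProbabilityMeasure_signs (n : ℕ) : IsProbabilityMeasure (signs n) := by
  rw [signs]; infer_instance

lemma integral_exp_mul_P (n : ℕ) (l x : ℝ) :
    ∫ ω, exp (l * P n ω x) ∂(signs n) = ∏ m : Fin (n + 1), cosh (l * n.choose m * cos (m * x)) := by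
  have hP : ∀ ω, l * P n ω x = ∑ m : Fin (n + 1), l * n.choose m * cos (m * x) * eps ω m :=
    fun ω => by rw [P, mul_sum]; exact sum_congr rfl fun m _ => by ring
  simp_rw [hP]
  exact integral_exp_sum_mul_eps n _

noncomputable def lowerExponent (n : ℕ) (l x : ℝ) : ℝ :=
  ∑ m : Fin (n + 1), ((l * n.choose m) ^ 2 / 2 * cos (m * x) ^ 2 - (l * n.choose m) ^ 4 / 4)

lemma continuous_lowerExponent (n : ℕ) (l : ℝ) : Continuous (lowerExponent n l) := by
  unfold lowerExponent; fun_prop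

lemma exp_lowerExponent_le_integral_exp_mul_P (n : ℕ) (l x : ℝ) :
    exp (lowerExponent n l x) ≤ ∫ ω, exp (l * P n ω x) ∂(signs n) := by
  rw [integral_exp_mul_P, lowerExponent, exp_sum]
  refine prod_le_prod (fun m _ => (exp_pos _).le) fun m _ => ?_
  refine le_trans ?_ (exp_sq_div_two_sub_pow_four_div_four_le_cosh _)
  have hcos := cos_sq_le_one (m * x)
  have hcos4 : (cos (m * x) ^ 2) ^ 2 ≤ 1 := pow_le_one₀ (sq_nonneg _) hcos
  have h4 : (l * n.choose m) ^ 4 * (cos (m * x) ^ 2) ^ 2 ≤ (l * n.choose m) ^ 4 :=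
    mul_le_of_le_one_right (by positivity) hcos4
  apply exp_le_exp.2
  linear_combination h4 / 4

lemma two_pi_mul_le_integral_lowerExponent (n : ℕ) (l : ℝ) :
    2 * π * (1 / 4 * l ^ 2 * R n - l ^ 4 * T n) ≤ ∫ x in (0:ℝ)..(2 * π), lowerExponent n l x := by
  have hT : 0 ≤ T n := sum_nonneg fun m _ => by positivity
  simp only [lowerExponent]
  rw [intervalIntegral.integral_finsetSum fun m _ => by
    apply Continuous.intervalIntegrable; fun_prop]
  have hterm : ∀ m : Fin (n + 1), ∫ x in (0:ℝ)..(2 * π),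
      ((l * n.choose m) ^ 2 / 2 * cos (m * x) ^ 2 - (l * n.choose m) ^ 4 / 4)
      = (l * n.choose m) ^ 2 / 2 * (∫ x in (0:ℝ)..(2 * π), cos (m * x) ^ 2)
        - 2 * π * ((l * n.choose m) ^ 4 / 4) := fun m => by
    rw [intervalIntegral.integral_sub (by apply Continuous.intervalIntegrable; fun_prop)
      intervalIntegrable_const, intervalIntegral.integral_const_mul,
      intervalIntegral.integral_const, smul_eq_mul, sub_zero]
  have hsum : ∑ m : Fin (n + 1),
      ((l * n.choose m) ^ 2 / 2 * π - 2 * π * ((l * n.choose m) ^ 4 / 4))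
      = π / 2 * l ^ 2 * R n - π / 2 * l ^ 4 * T n := by
    rw [R, T, ← Fin.sum_univ_eq_sum_range (fun m => (n.choose m : ℝ) ^ 2),
      ← Fin.sum_univ_eq_sum_range (fun m => (n.choose m : ℝ) ^ 4), mul_sum, mul_sum,
      ← sum_sub_distrib]
    exact sum_congr rfl fun m _ => by ring
  simp_rw [hterm]
  calc 2 * π * (1 / 4 * l ^ 2 * R n - l ^ 4 * T n)
      ≤ π / 2 * l ^ 2 * R n - π / 2 * l ^ 4 * T n := by
        nlinarith [mul_nonneg (mul_nonneg pi_pos.le (by positivity : (0:ℝ) ≤ l ^ 4)) hT]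
    _ = _ := hsum.symm
    _ ≤ _ := by
        gcongr with m
        exact pi_le_integral_cos_nat_mul_sq m

theorem stmt12_general (n : ℕ) (l : ℝ) :
    (∫ ω, ((1/(2*π)) * ∫ x in (0:ℝ)..(2*π), Real.exp (l * P n ω x)) ∂(signs n))
      ≥ Real.exp (1/4 * l^2 * R n - l^4 * T n) := by
  have hP : ∀ ω, Continuous fun x => exp (l * P n ω x) := fun ω => by unfold P; fun_prop
  have hE : Continuous fun x => ∫ ω, exp (l * P n ω x) ∂(signs n) := by
    simp_rw [integral_exp_mul_P]; fun_prop
  have hQ := continuous_lowerExponent n l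
  rw [integral_const_mul, integral_intervalIntegral_comm_of_fintype _
      fun ω => (hP ω).intervalIntegrable _ _,
    ge_iff_le, ← inv_eq_one_div (2 * π), le_inv_mul_iff₀ (by positivity)]
  calc 2 * π * exp (1 / 4 * l ^ 2 * R n - l ^ 4 * T n)
      = exp (1 / 4 * l ^ 2 * R n - l ^ 4 * T n) * (2 * π - 0) := by ring
    _ ≤ ∫ x in (0:ℝ)..(2 * π), exp (lowerExponent n l x) :=
        exp_mul_le_intervalIntegral_exp (by positivity) (hQ.intervalIntegrable _ _)
          ((continuous_exp.comp hQ).intervalIntegrable _ _)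
          (by rw [sub_zero, mul_comm]; exact two_pi_mul_le_integral_lowerExponent n l)
    _ ≤ _ := intervalIntegral.integral_mono_on (by positivity)
          ((continuous_exp.comp hQ).intervalIntegrable _ _) (hE.intervalIntegrable _ _)
          fun x _ => exp_lowerExponent_le_integral_exp_mul_P n l x

theorem stmt12 (n : ℕ) (hn : 1 ≤ n) (l : ℝ) :
    (∫ ω, ((1/(2*π)) * ∫ x in (0:ℝ)..(2*π), Real.exp (l * P n ω x)) ∂(signs n))
      ≥ Real.exp (1/4 * l^2 * R n - l^4 * T n) :=
  stmt12_general n l
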